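/- Let L be a nonnegative square matrix with spectral radius s(L). Define q_n = E[∏_{t=1}^n M_t] where M_t is the discount process generated by a finite irreducible Markov chain with stationary initial distribution and L(z,z') = Φ(z,z')E[m(z',ε)]. Then the asymptotic yield κ(M) := lim_{n→∞} (−ln q_n)/n exists and equals −ln s(L). -/

import Mathlib

open MeasureTheory Filter

/-- Path expectation `E_z[∏_{t=1}^n M_t · h(Z_n)]` (innovations integrated out). -/
noncomputable def pathExp {Z : Type*} [Fintype Z] (Φ : Z → Z → ℝ) (mbar : Z → ℝ)
    (n : ℕ) (h : Z → ℝ) (z : Z) : ℝ :=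
  ∑ ω : Fin n → Z,
    (∏ i : Fin n,
      Φ (if hi : (i : ℕ) = 0 then z
         else ω ⟨(i : ℕ) - 1, lt_of_le_of_lt (Nat.sub_le _ _) i.isLt⟩) (ω i)
        * mbar (ω i)) *
    (if hn : n = 0 then h z
     else h (ω ⟨n - 1, Nat.sub_lt (Nat.pos_of_ne_zero hn) Nat.one_pos⟩))

/-- The spectral radius of a real square matrix, viewed as a continuous linear operator on
Euclidean space. -/
noncomputable def specRad {Z : Type*} [Fintype Z] [DecidableEq Z] (L : Matrix Z Z ℝ) : ℝ :=
  (spectralRadius ℝ (LinearMap.toContinuousLinearMap (Matrix.toEuclideanLin L))).toReal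

/-!
Let `p n` be the sum of the entries of `Lⁿ`. As `L` is nonnegative and the stationary law is
positive, `q n = π ⬝ᵥ Lⁿ 1` lies between two constant multiples of `p n`. The sequence `p` is
submultiplicative, so by Fekete's lemma `log (p n) / n → log ρ`, with `ρⁿ ≤ p n` for all `n`.
An eigenvalue `μ` has `|μ|ⁿ ≲ p n`, hence `|μ| ≤ ρ`. Conversely `ρ` is an eigenvalue: otherwise
the entry sum of `(1 - t L)⁻¹` would be continuous at `t = ρ⁻¹`, whereas for `t < ρ⁻¹` it is the
Neumann series `∑ tⁿ p n ≥ ∑ (t ρ)ⁿ`, which is unbounded as `t ↑ ρ⁻¹`.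
-/

open Topology Matrix

theorem exists_tendsto_log_div_of_submultiplicative {p : ℕ → ℝ} {c : ℝ} (hc : 0 < c)
    (hlow : ∀ n, c ^ n ≤ p n) (hmul : ∀ m n, p (m + n) ≤ p m * p n) :
    ∃ ρ, 0 < ρ ∧ (∀ n, ρ ^ n ≤ p n) ∧
      Tendsto (fun n : ℕ => Real.log (p n) / n) atTop (𝓝 (Real.log ρ)) := by
  have hp : ∀ n, 0 < p n := fun n => (pow_pos hc n).trans_le (hlow n)
  have hsub : Subadditive fun n => Real.log (p n) := fun m n => by
    rw [← Real.log_mul (hp m).ne' (hp n).ne']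
    exact Real.log_le_log (hp _) (hmul m n)
  have hbdd : BddBelow (Set.range fun n : ℕ => Real.log (p n) / n) := by
    refine ⟨min 0 (Real.log c), ?_⟩
    rintro _ ⟨n, rfl⟩
    rcases n.eq_zero_or_pos with rfl | hn
    · simp
    · refine (min_le_right _ _).trans ?_
      rw [le_div_iff₀ (by positivity), mul_comm, ← Real.log_pow]
      exact Real.log_le_log (pow_pos hc n) (hlow n)
  refine ⟨Real.exp hsub.lim, Real.exp_pos _, fun n => ?_, by simpa using hsub.tendsto_lim hbdd⟩
  rcases n.eq_zero_or_pos with rfl | hn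
  · simpa using hlow 0
  · rw [← Real.exp_log (hp n), ← Real.exp_nat_mul]
    gcongr
    rw [mul_comm, ← le_div_iff₀ (by positivity)]
    exact hsub.lim_le_div hbdd hn.ne'

theorem tendsto_pow_mul_of_tendsto_log_div {p : ℕ → ℝ} {ρ t : ℝ} (hp : ∀ n, 0 < p n)
    (hlim : Tendsto (fun n : ℕ => Real.log (p n) / n) atTop (𝓝 (Real.log ρ)))
    (ht : 0 < t) (htρ : t < ρ⁻¹) : Tendsto (fun n => t ^ n * p n) atTop (𝓝 0) := by
  have hlog : Tendsto (fun n : ℕ => (n : ℝ) * (Real.log t + Real.log (p n) / n)) atTop atBot := by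
    refine tendsto_natCast_atTop_atTop.atTop_mul_neg ?_ (hlim.const_add _)
    have := Real.log_lt_log ht htρ
    rw [Real.log_inv] at this
    linarith
  refine (Real.tendsto_exp_atBot.comp hlog).congr' ?_
  filter_upwards [eventually_ne_atTop 0] with n hn
  rw [Function.comp_apply, mul_add, mul_div_cancel₀ _ (Nat.cast_ne_zero.mpr hn), Real.exp_add,
    Real.exp_nat_mul, Real.exp_log ht, Real.exp_log (hp n)]

theorem tendsto_log_div_of_le_mul_of_mul_le {p q : ℕ → ℝ} {a b l : ℝ} (ha : 0 < a)
    (hp : ∀ n, 0 < p n) (hpq : ∀ n, a * p n ≤ q n) (hqp : ∀ n, q n ≤ b * p n)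
    (hlim : Tendsto (fun n : ℕ => Real.log (p n) / n) atTop (𝓝 l)) :
    Tendsto (fun n : ℕ => Real.log (q n) / n) atTop (𝓝 l) := by
  have hq : ∀ n, 0 < q n := fun n => (mul_pos ha (hp n)).trans_le (hpq n)
  have hb : 0 < b := pos_of_mul_pos_left ((hq 0).trans_le (hqp 0)) (hp 0).le
  have hbound : ∀ k : ℝ, Tendsto (fun n : ℕ => (Real.log k + Real.log (p n)) / n) atTop (𝓝 l) :=
    fun k => by simpa [add_div] using (tendsto_const_div_atTop_nhds_zero_nat (Real.log k)).add hlim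
  refine tendsto_of_tendsto_of_tendsto_of_le_of_le (hbound a) (hbound b) (fun n => ?_) fun n => ?_
  · rw [← Real.log_mul ha.ne' (hp n).ne']
    gcongr
    exacts [mul_pos ha (hp n), hpq n]
  · rw [← Real.log_mul hb.ne' (hp n).ne']
    gcongr
    exacts [hq n, hqp n]

theorem isUnit_one_sub_smul_of_inv_notMem_spectrum {K R : Type*} [Field K] [Ring R]
    [Algebra K R] {a : R} {t : K} (ht : t ≠ 0) (h : t⁻¹ ∉ spectrum K a) : IsUnit (1 - t • a) := by
  convert ((IsUnit.mk0 t ht).map (algebraMap K R)).mul (spectrum.notMem_iff.mp h) using 1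
  rw [mul_sub, ← map_mul, mul_inv_cancel₀ ht, map_one, ← Algebra.smul_def]

namespace Matrix

variable {ι : Type*} [Fintype ι]

theorem tendsto_sum_range_pow_mulVec {R : Type*} [CommRing R] [TopologicalSpace R]
    [IsTopologicalRing R] [DecidableEq ι] {A : Matrix ι ι R} (hA : IsUnit (1 - A)) {x : ι → R}
    (hx : Tendsto (fun N => A ^ N *ᵥ x) atTop (𝓝 0)) :
    Tendsto (fun N => ∑ n ∈ Finset.range N, A ^ n *ᵥ x) atTop (𝓝 ((1 - A)⁻¹ *ᵥ x)) := by
  have hsum : ∀ N, ∑ n ∈ Finset.range N, A ^ n *ᵥ x =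
      (1 - A)⁻¹ *ᵥ x - (1 - A)⁻¹ *ᵥ (A ^ N *ᵥ x) := by
    intro N
    have hgeom : ∑ n ∈ Finset.range N, A ^ n = (1 - A)⁻¹ * (1 - A ^ N) := by
      rw [← mul_neg_geom_sum, ← mul_assoc,
        nonsing_inv_mul _ ((isUnit_iff_isUnit_det _).mp hA), one_mul]
    rw [← sum_mulVec, hgeom, ← mulVec_mulVec, sub_mulVec, one_mulVec, mulVec_sub]
  have hcont : Continuous fun y : ι → R => (1 - A)⁻¹ *ᵥ y :=
    continuous_const.matrix_mulVec continuous_id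
  simpa [hsum] using tendsto_const_nhds.sub ((hcont.tendsto 0).comp hx)

theorem exists_pow_mulVec_eq_smul_of_mem_spectrum {K : Type*} [Field K] [DecidableEq ι]
    {A : Matrix ι ι K} {μ : K} (h : μ ∈ spectrum K A) :
    ∃ v ≠ 0, ∀ n : ℕ, A ^ n *ᵥ v = μ ^ n • v := by
  rw [← spectrum_toLin', ← Module.End.hasEigenvalue_iff_mem_spectrum] at h
  obtain ⟨v, hv⟩ := h.exists_hasEigenvector
  exact ⟨v, hv.2, fun n => by simpa [← toLin'_pow] using hv.pow_apply n⟩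

theorem continuousAt_inv_one_sub_smul [DecidableEq ι] {A : Matrix ι ι ℝ} {t₀ : ℝ}
    (h : IsUnit (1 - t₀ • A)) : ContinuousAt (fun t : ℝ => (1 - t • A)⁻¹) t₀ := by
  have hdet := (isUnit_iff_isUnit_det _).mp h
  refine (continuousAt_matrix_inv _ ?_).comp (by fun_prop)
  rw [Ring.inverse_eq_inv']
  exact continuousAt_inv₀ hdet.ne_zero

def entrySum (A : Matrix ι ι ℝ) : ℝ := ∑ i, ∑ j, A i j

theorem continuous_entrySum : Continuous (entrySum : Matrix ι ι ℝ → ℝ) := by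
  unfold entrySum
  fun_prop

theorem one_dotProduct_mulVec_one (A : Matrix ι ι ℝ) : 1 ⬝ᵥ (A *ᵥ 1) = entrySum A := by
  simp [entrySum, dotProduct, mulVec]

section Nonneg

variable {A B : Matrix ι ι ℝ}

theorem mulVec_mono (hA : ∀ i j, 0 ≤ A i j) {x y : ι → ℝ} (hxy : x ≤ y) : A *ᵥ x ≤ A *ᵥ y :=
  fun i => dotProduct_le_dotProduct_of_nonneg_left hxy (hA i)

theorem mulVec_one_apply_le_entrySum (hA : ∀ i j, 0 ≤ A i j) (i : ι) :
    (A *ᵥ 1) i ≤ entrySum A := by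
  simpa [entrySum, mulVec, dotProduct] using
    Finset.single_le_sum (fun k _ => Finset.sum_nonneg fun j _ => hA k j) (Finset.mem_univ i)

theorem entrySum_mul_le (hA : ∀ i j, 0 ≤ A i j) (hB : ∀ i j, 0 ≤ B i j) :
    entrySum (A * B) ≤ entrySum A * entrySum B := by
  have hrow : B *ᵥ 1 ≤ entrySum B • 1 := fun i => by
    simpa using mulVec_one_apply_le_entrySum hB i
  calc entrySum (A * B) = 1 ⬝ᵥ (A *ᵥ (B *ᵥ 1)) := by
        rw [mulVec_mulVec, one_dotProduct_mulVec_one]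
    _ ≤ 1 ⬝ᵥ (A *ᵥ (entrySum B • 1)) :=
      dotProduct_le_dotProduct_of_nonneg_left (mulVec_mono hA hrow) zero_le_one
    _ = entrySum A * entrySum B := by
      rw [mulVec_smul, dotProduct_smul, one_dotProduct_mulVec_one, smul_eq_mul, mul_comm]

theorem abs_mulVec_apply_le (hA : ∀ i j, 0 ≤ A i j) {x : ι → ℝ} {M : ℝ} (hx : ∀ j, |x j| ≤ M)
    (i : ι) : |(A *ᵥ x) i| ≤ M * (A *ᵥ 1) i := by
  have hup : x ≤ M • 1 := fun j => by simpa using (le_abs_self (x j)).trans (hx j)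
  have hlow : -(M • 1) ≤ x := fun j => by
    simpa using (neg_le_neg (hx j)).trans (neg_abs_le (x j))
  refine abs_le.mpr ⟨?_, ?_⟩
  · simpa [mulVec_neg, mulVec_smul] using mulVec_mono hA hlow i
  · simpa [mulVec_smul] using mulVec_mono hA hup i

variable [DecidableEq ι]

theorem pow_mulVec_one_nonneg (hA : ∀ i j, 0 ≤ A i j) (n : ℕ) : 0 ≤ A ^ n *ᵥ 1 := by
  simpa using mulVec_mono (pow_apply_nonneg hA n) (zero_le_one : (0 : ι → ℝ) ≤ 1)

theorem pow_le_pow_mulVec_one (hA : ∀ i j, 0 ≤ A i j) {c : ℝ} (hc : 0 ≤ c)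
    (hrow : ∀ i, c ≤ (A *ᵥ 1) i) (n : ℕ) (i : ι) : c ^ n ≤ (A ^ n *ᵥ 1) i := by
  induction n generalizing i with
  | zero => simp
  | succ n ih =>
    calc c ^ (n + 1) = c ^ n * c := pow_succ c n
      _ ≤ c ^ n * (A *ᵥ 1) i := mul_le_mul_of_nonneg_left (hrow i) (pow_nonneg hc n)
      _ = (A *ᵥ (c ^ n • 1)) i := by rw [mulVec_smul]; rfl
      _ ≤ (A *ᵥ (A ^ n *ᵥ 1)) i := mulVec_mono hA (fun j => by simpa using ih j) i
      _ = (A ^ (n + 1) *ᵥ 1) i := by rw [pow_succ', mulVec_mulVec]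

theorem pow_le_entrySum_pow [Nonempty ι] (hA : ∀ i j, 0 ≤ A i j) {c : ℝ} (hc : 0 ≤ c)
    (hrow : ∀ i, c ≤ (A *ᵥ 1) i) (n : ℕ) : c ^ n ≤ entrySum (A ^ n) :=
  (pow_le_pow_mulVec_one hA hc hrow n (Classical.arbitrary ι)).trans
    (mulVec_one_apply_le_entrySum (pow_apply_nonneg hA n) _)

theorem pos_of_vecMul_eq_self (hA : ∀ i j, 0 ≤ A i j) (hirr : ∀ i j, ∃ n : ℕ, 0 < (A ^ n) i j)
    {w : ι → ℝ} (hw : 0 ≤ w) (hw0 : w ≠ 0) (hstat : w ᵥ* A = w) (j : ι) : 0 < w j := by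
  obtain ⟨i, hi⟩ := Function.ne_iff.mp hw0
  obtain ⟨n, hn⟩ := hirr i j
  have hstatn : ∀ k : ℕ, w ᵥ* A ^ k = w := fun k => by
    induction k with
    | zero => simp
    | succ k ih => rw [pow_succ, ← vecMul_vecMul, ih, hstat]
  calc 0 < w i * (A ^ n) i j := mul_pos ((hw i).lt_of_ne' hi) hn
    _ ≤ ∑ k, w k * (A ^ n) k j :=
      Finset.single_le_sum (f := fun k => w k * (A ^ n) k j)
        (fun k _ => mul_nonneg (hw k) (pow_apply_nonneg hA n k j)) (Finset.mem_univ i)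
    _ = w j := congrFun (hstatn n) j

end Nonneg

section Perron

variable [DecidableEq ι] {A : Matrix ι ι ℝ} {ρ : ℝ} (hA : ∀ i j, 0 ≤ A i j) (hρ : 0 < ρ)
  (hpow : ∀ n, ρ ^ n ≤ entrySum (A ^ n))
  (hlim : Tendsto (fun n : ℕ => Real.log (entrySum (A ^ n)) / n) atTop (𝓝 (Real.log ρ)))
include hA hρ hpow hlim

theorem abs_le_of_mem_spectrum {μ : ℝ} (hμ : μ ∈ spectrum ℝ A) : |μ| ≤ ρ := by
  have hp : ∀ n, 0 < entrySum (A ^ n) := fun n => (pow_pos hρ n).trans_le (hpow n)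
  obtain ⟨v, hv0, hv⟩ := exists_pow_mulVec_eq_smul_of_mem_spectrum hμ
  obtain ⟨i, hi⟩ := Function.ne_iff.mp hv0
  by_contra! hρμ
  have hμ0 : 0 < |μ| := hρ.trans hρμ
  have hM : ∀ j, |v j| ≤ ∑ k, |v k| := fun j =>
    Finset.single_le_sum (f := fun k => |v k|) (fun k _ => abs_nonneg _) (Finset.mem_univ j)
  have hbound : ∀ n, |v i| ≤ (∑ k, |v k|) * (|μ|⁻¹ ^ n * entrySum (A ^ n)) := by
    intro n
    have h := abs_mulVec_apply_le (pow_apply_nonneg hA n) hM i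
    rw [hv, Pi.smul_apply, smul_eq_mul, abs_mul, abs_pow] at h
    calc |v i| = |μ|⁻¹ ^ n * (|μ| ^ n * |v i|) := by
          rw [← mul_assoc, ← mul_pow, inv_mul_cancel₀ hμ0.ne', one_pow, one_mul]
      _ ≤ |μ|⁻¹ ^ n * ((∑ k, |v k|) * entrySum (A ^ n)) :=
        mul_le_mul_of_nonneg_left (h.trans (mul_le_mul_of_nonneg_left
          (mulVec_one_apply_le_entrySum (pow_apply_nonneg hA n) i) ((abs_nonneg _).trans (hM i))))
          (by positivity)
      _ = _ := by ring
  have hdecay := tendsto_pow_mul_of_tendsto_log_div hp hlim (inv_pos.mpr hμ0)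
    (inv_strictAnti₀ hρ hρμ)
  have : |v i| ≤ 0 := ge_of_tendsto' (by simpa using hdecay.const_mul (∑ k, |v k|)) hbound
  exact hi (abs_nonpos_iff.mp this)

theorem sum_range_pow_mul_entrySum_le {t : ℝ} (ht : 0 < t) (htρ : t < ρ⁻¹)
    (hunit : IsUnit (1 - t • A)) (N : ℕ) :
    ∑ n ∈ Finset.range N, t ^ n * entrySum (A ^ n) ≤ entrySum (1 - t • A)⁻¹ := by
  have hp : ∀ n, 0 < entrySum (A ^ n) := fun n => (pow_pos hρ n).trans_le (hpow n)
  have hdecay : Tendsto (fun N => (t • A) ^ N *ᵥ 1) atTop (𝓝 0) := by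
    refine tendsto_pi_nhds.mpr fun i => squeeze_zero (fun N => ?_) (fun N => ?_)
      (tendsto_pow_mul_of_tendsto_log_div hp hlim ht htρ)
    · rw [smul_pow, smul_mulVec, Pi.smul_apply, smul_eq_mul]
      exact mul_nonneg (pow_nonneg ht.le N) (pow_mulVec_one_nonneg hA N i)
    · rw [smul_pow, smul_mulVec, Pi.smul_apply, smul_eq_mul]
      exact mul_le_mul_of_nonneg_left
        (mulVec_one_apply_le_entrySum (pow_apply_nonneg hA N) i) (pow_nonneg ht.le N)
  have hdot : Continuous fun x : ι → ℝ => 1 ⬝ᵥ x := continuous_const.dotProduct continuous_id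
  have hsum := (hdot.tendsto _).comp (tendsto_sum_range_pow_mulVec hunit hdecay)
  simp only [Function.comp_def, dotProduct_sum, smul_pow, smul_mulVec, dotProduct_smul,
    one_dotProduct_mulVec_one, smul_eq_mul] at hsum
  have hnonneg : ∀ n, 0 ≤ t ^ n * entrySum (A ^ n) := fun n =>
    mul_nonneg (pow_nonneg ht.le n) (hp n).le
  exact sum_le_hasSum _ (fun n _ => hnonneg n)
    ((hasSum_iff_tendsto_nat_of_nonneg hnonneg _).mpr hsum)

theorem mem_spectrum_of_pow_le_entrySum : ρ ∈ spectrum ℝ A := by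
  by_contra hρA
  have hunit : ∀ t, 0 < t → t ≤ ρ⁻¹ → IsUnit (1 - t • A) := by
    intro t ht htρ
    refine isUnit_one_sub_smul_of_inv_notMem_spectrum ht.ne' fun hmem => ?_
    rcases ((le_inv_comm₀ ht hρ).mp htρ).eq_or_lt with h | h
    · exact hρA (h ▸ hmem)
    · have := abs_le_of_mem_spectrum hA hρ hpow hlim hmem
      rw [abs_of_pos (inv_pos.mpr ht)] at this
      exact this.not_gt h
  have hg : ContinuousAt (fun t : ℝ => entrySum (1 - t • A)⁻¹) ρ⁻¹ :=
    continuous_entrySum.continuousAt.comp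
      (continuousAt_inv_one_sub_smul (hunit _ (inv_pos.mpr hρ) le_rfl))
  have hN : ∀ N : ℕ, (N : ℝ) ≤ entrySum (1 - ρ⁻¹ • A)⁻¹ := by
    intro N
    have hpoly : Continuous fun t : ℝ => ∑ n ∈ Finset.range N, t ^ n * entrySum (A ^ n) := by
      fun_prop
    calc (N : ℝ) = ∑ n ∈ Finset.range N, 1 := by simp
      _ ≤ ∑ n ∈ Finset.range N, ρ⁻¹ ^ n * entrySum (A ^ n) := by
        refine Finset.sum_le_sum fun n _ => ?_
        calc (1 : ℝ) = ρ⁻¹ ^ n * ρ ^ n := by rw [← mul_pow, inv_mul_cancel₀ hρ.ne', one_pow]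
          _ ≤ ρ⁻¹ ^ n * entrySum (A ^ n) := by gcongr; exact hpow n
      _ ≤ entrySum (1 - ρ⁻¹ • A)⁻¹ := by
        refine le_of_tendsto_of_tendsto (b := 𝓝[<] ρ⁻¹)
          ((hpoly.tendsto ρ⁻¹).mono_left nhdsWithin_le_nhds)
          (hg.tendsto.mono_left nhdsWithin_le_nhds) ?_
        filter_upwards [Ioo_mem_nhdsLT (inv_pos.mpr hρ)] with t ht
        exact sum_range_pow_mul_entrySum_le hA hρ hpow hlim ht.1 ht.2 (hunit t ht.1 ht.2.le) N
  obtain ⟨N, hN'⟩ := exists_nat_gt (entrySum (1 - ρ⁻¹ • A)⁻¹)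
  exact (hN N).not_gt hN'

end Perron

end Matrix

section SpectralRadius

variable {ι : Type*} [Fintype ι] [DecidableEq ι]

theorem specRad_eq_of_mem_spectrum {A : Matrix ι ι ℝ} {ρ : ℝ} (hρ : ρ ∈ spectrum ℝ A)
    (hle : ∀ μ ∈ spectrum ℝ A, |μ| ≤ ρ) : specRad A = ρ := by
  have hρ0 : |ρ| = ρ := abs_of_nonneg ((abs_nonneg ρ).trans (hle ρ hρ))
  have hsp : spectrum ℝ (LinearMap.toContinuousLinearMap (toEuclideanLin A)) = spectrum ℝ A := by
    rw [← AlgEquiv.spectrum_eq (toEuclideanCLM (𝕜 := ℝ) (n := ι)) A]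
    rfl
  have hrad : spectralRadius ℝ (LinearMap.toContinuousLinearMap (toEuclideanLin A)) = ‖ρ‖₊ := by
    rw [spectralRadius, hsp]
    refine le_antisymm (iSup₂_le fun μ hμ => ?_) (le_iSup₂_of_le ρ hρ le_rfl)
    rw [ENNReal.coe_le_coe, ← NNReal.coe_le_coe, coe_nnnorm, coe_nnnorm, Real.norm_eq_abs,
      Real.norm_eq_abs, hρ0]
    exact hle μ hμ
  rw [specRad, hrad, ENNReal.coe_toReal, coe_nnnorm, Real.norm_eq_abs, hρ0]

theorem tendsto_log_entrySum_pow_div [Nonempty ι] {A : Matrix ι ι ℝ} (hA : ∀ i j, 0 ≤ A i j)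
    {c : ℝ} (hc : 0 < c) (hrow : ∀ i, c ≤ (A *ᵥ 1) i) :
    Tendsto (fun n : ℕ => Real.log (entrySum (A ^ n)) / n) atTop (𝓝 (Real.log (specRad A))) := by
  obtain ⟨ρ, hρ, hpow, hlim⟩ := exists_tendsto_log_div_of_submultiplicative hc
    (pow_le_entrySum_pow hA hc.le hrow) fun m n => by
      rw [pow_add]
      exact entrySum_mul_le (pow_apply_nonneg hA m) (pow_apply_nonneg hA n)
  rwa [specRad_eq_of_mem_spectrum (mem_spectrum_of_pow_le_entrySum hA hρ hpow hlim)
    fun μ hμ => abs_le_of_mem_spectrum hA hρ hpow hlim hμ]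

theorem tendsto_log_dotProduct_pow_mulVec_div [Nonempty ι] {A : Matrix ι ι ℝ}
    (hA : ∀ i j, 0 ≤ A i j) {c : ℝ} (hc : 0 < c) (hrow : ∀ i, c ≤ (A *ᵥ 1) i) {w : ι → ℝ}
    (hw : ∀ i, 0 < w i) :
    Tendsto (fun n : ℕ => Real.log (w ⬝ᵥ (A ^ n *ᵥ 1)) / n) atTop
      (𝓝 (Real.log (specRad A))) := by
  obtain ⟨i₀, hi₀⟩ := Finite.exists_min w
  obtain ⟨i₁, hi₁⟩ := Finite.exists_max w
  have hconst : ∀ (a : ℝ) n, (a • 1 : ι → ℝ) ⬝ᵥ (A ^ n *ᵥ 1) = a * entrySum (A ^ n) := by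
    intro a n
    rw [smul_dotProduct, one_dotProduct_mulVec_one, smul_eq_mul]
  refine tendsto_log_div_of_le_mul_of_mul_le (b := w i₁) (hw i₀)
    (fun n => (pow_pos hc n).trans_le (pow_le_entrySum_pow hA hc.le hrow n)) (fun n => ?_)
    (fun n => ?_) (tendsto_log_entrySum_pow_div hA hc hrow)
  · rw [← hconst]
    exact dotProduct_le_dotProduct_of_nonneg_right (fun j => by simpa using hi₀ j)
      (pow_mulVec_one_nonneg hA n)
  · rw [← hconst]
    exact dotProduct_le_dotProduct_of_nonneg_right (fun j => by simpa using hi₁ j)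
      (pow_mulVec_one_nonneg hA n)

end SpectralRadius

section PathExp

variable {Z : Type*} [Fintype Z] (Φ : Z → Z → ℝ) (mbar : Z → ℝ)

theorem pathExp_eq_sum_vecCons (n : ℕ) (h : Z → ℝ) (z : Z) :
    pathExp Φ mbar n h z = ∑ ω : Fin n → Z,
      (∏ i : Fin n, Φ (vecCons z ω i.castSucc) (ω i) * mbar (ω i)) *
        h (vecCons z ω (Fin.last n)) := by
  have hcons : ∀ (ω : Fin n → Z) (j : Fin (n + 1)), vecCons z ω j =
      if hj : (j : ℕ) = 0 then z else ω ⟨j - 1, by omega⟩ := by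
    intro ω j
    cases j using Fin.cases with
    | zero => simp
    | succ j => simp
  simp only [pathExp, hcons, Fin.val_last, Fin.val_castSucc, apply_dite h]

theorem pathExp_succ (n : ℕ) (h : Z → ℝ) (z : Z) :
    pathExp Φ mbar (n + 1) h z = ∑ y, Φ z y * mbar y * pathExp Φ mbar n h y := by
  simp only [pathExp_eq_sum_vecCons, Finset.mul_sum]
  rw [← (Fin.consEquiv fun _ => Z).sum_comp, Fintype.sum_prod_type]
  simp only [vecCons, Fin.consEquiv, Equiv.coe_fn_mk, Fin.prod_univ_succ, Fin.castSucc_zero,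
    Fin.cons_zero, Fin.castSucc_succ, Fin.cons_succ, ← Fin.succ_last, mul_assoc]

theorem pathExp_eq_pow_mulVec [DecidableEq Z] (n : ℕ) (h : Z → ℝ) (z : Z) :
    pathExp Φ mbar n h z = ((of fun a b => Φ a b * mbar b) ^ n *ᵥ h) z := by
  induction n generalizing z with
  | zero => simp [pathExp]
  | succ n ih =>
    rw [pathExp_succ, pow_succ', ← mulVec_mulVec]
    simp only [mulVec, dotProduct, of_apply, ih]

end PathExp

theorem stmt1_general {Z : Type*} [Fintype Z] [DecidableEq Z] [Nonempty Z]
    {Ωe : Type*} [MeasurableSpace Ωe] (με : Measure Ωe)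
    (Φ : Z → Z → ℝ) (m : Z → Ωe → ℝ)
    (hΦnn : ∀ z z', 0 ≤ Φ z z') (hΦrow : ∀ z, ∑ z', Φ z z' = 1)
    (hirr : ∀ z z', ∃ n : ℕ, 0 < ((Matrix.of Φ) ^ n) z z')
    (hm : ∀ z ε, 0 ≤ m z ε) (hmpos : ∀ z, 0 < ∫ ε, m z ε ∂με)
    (π : Z → ℝ) (hπnn : ∀ z, 0 ≤ π z) (hπsum : ∑ z, π z = 1)
    (hπstat : ∀ z', ∑ z, π z * Φ z z' = π z')
    (L : Matrix Z Z ℝ)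
    (hL : ∀ z z', L z z' = Φ z z' * ∫ ε, m z' ε ∂με)
    (q : ℕ → ℝ)
    (hq : ∀ n, q n = ∑ z, π z * pathExp Φ (fun z' => ∫ ε, m z' ε ∂με) n (fun _ => 1) z) :
    Tendsto (fun n : ℕ => - Real.log (q n) / n) atTop (nhds (- Real.log (specRad L))) := by
  set mbar : Z → ℝ := fun z' => ∫ ε, m z' ε ∂με
  have hLnn : ∀ z z', 0 ≤ L z z' := fun z z' => by
    rw [hL]
    exact mul_nonneg (hΦnn z z') (integral_nonneg (hm z'))
  obtain ⟨z₀, hz₀⟩ := Finite.exists_min mbar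
  have hrow : ∀ z, mbar z₀ ≤ (L *ᵥ 1) z := fun z =>
    calc mbar z₀ = ∑ z', Φ z z' * mbar z₀ := by rw [← Finset.sum_mul, hΦrow, one_mul]
      _ ≤ ∑ z', Φ z z' * mbar z' :=
        Finset.sum_le_sum fun z' _ => mul_le_mul_of_nonneg_left (hz₀ z') (hΦnn z z')
      _ = (L *ᵥ 1) z := by simp [mulVec, dotProduct, hL, mbar]
  have hπpos : ∀ z, 0 < π z := pos_of_vecMul_eq_self (A := of Φ) hΦnn hirr hπnn
    (fun h => by simp [h] at hπsum) (funext hπstat)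
  have hqL : ∀ n, q n = π ⬝ᵥ (L ^ n *ᵥ 1) := fun n => by
    have hLΦ : L = of fun a b => Φ a b * mbar b := by ext a b; exact hL a b
    rw [hq, hLΦ, dotProduct]
    simp only [pathExp_eq_pow_mulVec]
    rfl
  simpa [hqL, neg_div] using (tendsto_log_dotProduct_pow_mulVec_div hLnn (hmpos z₀) hrow hπpos).neg

/-- with `L(z,z') = Φ(z,z')·E[m(z',ε)]` and `q_n = E[∏_{t=1}^n M_t]` under the
stationary initial distribution `π`, the asymptotic yield `κ(M) = lim (−ln q_n)/n` exists and
equals `−ln s(L)`. -/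
theorem stmt1 {Z : Type*} [Fintype Z] [DecidableEq Z] [Nonempty Z]
    {Ωe : Type*} [MeasurableSpace Ωe] (με : Measure Ωe) [IsProbabilityMeasure με]
    (Φ : Z → Z → ℝ) (m : Z → Ωe → ℝ)
    (hΦnn : ∀ z z', 0 ≤ Φ z z') (hΦrow : ∀ z, ∑ z', Φ z z' = 1)
    (hirr : ∀ z z', ∃ n : ℕ, 0 < ((Matrix.of Φ) ^ n) z z')
    (hm : ∀ z ε, 0 ≤ m z ε) (hmpos : ∀ z, 0 < ∫ ε, m z ε ∂με)
    (hmint : ∀ z, Integrable (m z) με)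
    (π : Z → ℝ) (hπnn : ∀ z, 0 ≤ π z) (hπsum : ∑ z, π z = 1)
    (hπstat : ∀ z', ∑ z, π z * Φ z z' = π z')
    (L : Matrix Z Z ℝ)
    (hL : ∀ z z', L z z' = Φ z z' * ∫ ε, m z' ε ∂με)
    (q : ℕ → ℝ)
    (hq : ∀ n, q n = ∑ z, π z * pathExp Φ (fun z' => ∫ ε, m z' ε ∂με) n (fun _ => 1) z) :
    Tendsto (fun n : ℕ => - Real.log (q n) / n) atTop (nhds (- Real.log (specRad L))) :=
  stmt1_general με Φ m hΦnn hΦrow hirr hm hmpos π hπnn hπsum hπstat L hL q hq
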